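/- Let s be even and t odd integers. Then ν₂({n}_{s,t}) = ν₂(s·n/2) if n is even, and ν₂({n}_{s,t}) = 0 if n is odd. -/

import Mathlib

/-!
Since `s` is even and `t` is odd, `{n} ≡ n (mod 2)`, which settles odd `n`. For even `n` use the
doubling formula `{2k} = {k}⟨k⟩`, where `⟨k⟩ = s{k} + 2t{k-1}` is the Lucas companion. Because
`s ∣ {2j}`, the factor `⟨k⟩` is `s` times an odd number for odd `k`, and twice an odd number for
even `k`. Induction on the binary expansion of `k` then gives `ν₂({2k}) = ν₂(s) + ν₂(k)`, computed
with `emultiplicity`, which makes the degenerate cases `s = 0`, `k = 0` uniform.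
-/

/-- Generalized Fibonacci polynomials: {0}=0, {1}=1, {n}=s{n-1}+t{n-2}. -/
def gfib {R : Type*} [CommRing R] (s t : R) : ℕ → R
  | 0 => 0
  | 1 => 1
  | n + 2 => s * gfib s t (n + 1) + t * gfib s t n

/-- Generalized Lucas polynomials: ⟨0⟩=2, ⟨1⟩=s, ⟨n⟩=s⟨n-1⟩+t⟨n-2⟩. -/
def gluc {R : Type*} [CommRing R] (s t : R) : ℕ → R
  | 0 => 2
  | 1 => s
  | n + 2 => s * gluc s t (n + 1) + t * gluc s t n

theorem padicValInt_eq_of_emultiplicity_eq {p : ℕ} (hp : p ≠ 1) {a b : ℤ}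
    (h : emultiplicity (p : ℤ) a = emultiplicity (p : ℤ) b) : padicValInt p a = padicValInt p b := by
  have hzero : a = 0 ↔ b = 0 := by
    simpa [emultiplicity_eq_top, Int.finiteMultiplicity_iff, hp] using congrArg (· = ⊤) h
  by_cases ha : a = 0
  · rw [ha, hzero.mp ha]
  · rw [padicValInt.of_ne_one_ne_zero hp ha, padicValInt.of_ne_one_ne_zero hp (hzero.not.mp ha),
      multiplicity_eq_of_emultiplicity_eq h]

theorem Int.emultiplicity_two_eq_zero_of_odd {u : ℤ} (hu : Odd u) : emultiplicity 2 u = 0 :=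
  emultiplicity_eq_zero.mpr (Int.not_even_iff_odd.mpr hu ∘ even_iff_two_dvd.mpr)

theorem Int.emultiplicity_two_two_mul_odd {u : ℤ} (hu : Odd u) : emultiplicity 2 (2 * u) = 1 := by
  rw [emultiplicity_mul Int.prime_two, Int.emultiplicity_two_eq_zero_of_odd hu, add_zero,
    (FiniteMultiplicity.of_prime_left Int.prime_two two_ne_zero).emultiplicity_self]

section CommRing

variable {R : Type*} [CommRing R] (s t : R)

theorem gfib_add_two (n : ℕ) : gfib s t (n + 2) = s * gfib s t (n + 1) + t * gfib s t n := rfl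

theorem gluc_add_two (n : ℕ) : gluc s t (n + 2) = s * gluc s t (n + 1) + t * gluc s t n := rfl

theorem gluc_succ (n : ℕ) : gluc s t (n + 1) = s * gfib s t (n + 1) + 2 * t * gfib s t n := by
  induction n using Nat.twoStepInduction with
  | zero => simp [gfib, gluc]
  | one => simp [gfib, gluc]; ring
  | more n ih₁ ih₂ =>
    rw [gluc_add_two, ih₂, ih₁, show n + 2 + 1 = n + 1 + 2 from rfl, gfib_add_two s t (n + 1),
      gfib_add_two s t n]
    ring

theorem gfib_add_add_one (m n : ℕ) :
    gfib s t (m + n + 1) = gfib s t (m + 1) * gfib s t (n + 1) + t * gfib s t m * gfib s t n := by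
  induction m using Nat.twoStepInduction with
  | zero => simp [gfib]
  | one => rw [add_comm 1 n, gfib_add_two]; simp [gfib]
  | more m ih₁ ih₂ =>
    rw [show m + 2 + n + 1 = m + n + 1 + 2 by omega, gfib_add_two,
      show m + n + 1 + 1 = m + 1 + n + 1 by omega, ih₂, ih₁, gfib_add_two s t (m + 1), gfib_add_two]
    ring

theorem gfib_two_mul (n : ℕ) : gfib s t (2 * n) = gfib s t n * gluc s t n := by
  cases n with
  | zero => simp [gfib]
  | succ n =>
    rw [show 2 * (n + 1) = n + (n + 1) + 1 by omega, gfib_add_add_one, gluc_succ, gfib_add_two]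
    ring

theorem dvd_gfib_two_mul (n : ℕ) : s ∣ gfib s t (2 * n) := by
  induction n with
  | zero => simp [gfib]
  | succ n ih =>
    rw [show 2 * (n + 1) = 2 * n + 2 by omega, gfib_add_two]
    exact dvd_add (dvd_mul_right _ _) (dvd_mul_of_dvd_right ih _)

end CommRing

section EvenOdd

variable {s t : ℤ}

theorem odd_gfib_iff (hs : Even s) (ht : Odd t) (n : ℕ) : Odd (gfib s t n) ↔ Odd n := by
  induction n using Nat.twoStepInduction with
  | zero => simp [gfib]
  | one => simp [gfib]
  | more n ih _ =>
    rw [gfib_add_two, Int.odd_add', Int.odd_mul]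
    simp [ih, hs, ht, parity_simps]

theorem emultiplicity_two_gluc_two_mul_add_one (hs : Even s) (ht : Odd t) (n : ℕ) :
    emultiplicity 2 (gluc s t (2 * n + 1)) = emultiplicity 2 s := by
  obtain ⟨c, hc⟩ := dvd_gfib_two_mul s t n
  have hodd : Odd (gfib s t (2 * n + 1) + 2 * t * c) :=
    ((odd_gfib_iff hs ht _).mpr (odd_two_mul_add_one n)).add_even
      ((even_two.mul_right t).mul_right c)
  rw [gluc_succ, hc, show s * gfib s t (2 * n + 1) + 2 * t * (s * c)
      = s * (gfib s t (2 * n + 1) + 2 * t * c) by ring,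
    emultiplicity_mul Int.prime_two, Int.emultiplicity_two_eq_zero_of_odd hodd, add_zero]

theorem emultiplicity_two_gluc_two_mul (hs : Even s) (ht : Odd t) (n : ℕ) :
    emultiplicity 2 (gluc s t (2 * n)) = 1 := by
  cases n with
  | zero => simpa [gluc] using Int.emultiplicity_two_two_mul_odd odd_one
  | succ n =>
    obtain ⟨v, hv⟩ := hs.two_dvd
    have heven : Even (gfib s t (2 * (n + 1))) :=
      Int.not_odd_iff_even.mp ((odd_gfib_iff hs ht _).not.mpr (by simp [parity_simps]))
    have hodd : Odd (v * gfib s t (2 * (n + 1)) + t * gfib s t (2 * n + 1)) :=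
      (heven.mul_left v).add_odd (ht.mul ((odd_gfib_iff hs ht _).mpr (odd_two_mul_add_one n)))
    rw [← Int.emultiplicity_two_two_mul_odd hodd, show 2 * (n + 1) = 2 * n + 1 + 1 from rfl,
      gluc_succ, hv]
    congr 1
    ring

theorem emultiplicity_two_gfib_two_mul (hs : Even s) (ht : Odd t) (k : ℕ) :
    emultiplicity 2 (gfib s t (2 * k)) = emultiplicity 2 s + emultiplicity 2 (k : ℤ) := by
  induction k using Nat.evenOddRec with
  | h0 => simp [gfib]
  | h_even n ih =>
    rw [gfib_two_mul, emultiplicity_mul Int.prime_two, ih, emultiplicity_two_gluc_two_mul hs ht,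
      Nat.cast_mul, Nat.cast_ofNat, emultiplicity_mul Int.prime_two,
      (FiniteMultiplicity.of_prime_left Int.prime_two two_ne_zero).emultiplicity_self]
    ring
  | h_odd n _ =>
    rw [gfib_two_mul, emultiplicity_mul Int.prime_two,
      Int.emultiplicity_two_eq_zero_of_odd ((odd_gfib_iff hs ht _).mpr (odd_two_mul_add_one n)),
      emultiplicity_two_gluc_two_mul_add_one hs ht, zero_add,
      Int.emultiplicity_two_eq_zero_of_odd (u := ((2 * n + 1 : ℕ) : ℤ))
        (by exact_mod_cast odd_two_mul_add_one n),
      add_zero]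

end EvenOdd

theorem stmt13 (s t : ℤ) (hs : Even s) (ht : Odd t) (n : ℕ) :
    (Even n → padicValInt 2 (gfib s t n) = padicValInt 2 (s * n / 2)) ∧
    (Odd n → padicValInt 2 (gfib s t n) = 0) := by
  refine ⟨fun ⟨k, hk⟩ => ?_, fun hn => ?_⟩
  · have hsn : s * n / 2 = s * k := by
      rw [hk, Nat.cast_add, ← two_mul, mul_left_comm, Int.mul_ediv_cancel_left _ two_ne_zero]
    rw [hsn, hk, ← two_mul]
    refine padicValInt_eq_of_emultiplicity_eq (by norm_num) ?_
    rw [Nat.cast_ofNat, emultiplicity_two_gfib_two_mul hs ht, emultiplicity_mul Int.prime_two]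
  · exact padicValInt.eq_zero_of_not_dvd
      (Int.not_even_iff_odd.mpr ((odd_gfib_iff hs ht n).mpr hn) ∘ even_iff_two_dvd.mpr)
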